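/- arXiv:0706.0374 — 4 statements merged into one kernel-verified Lean document; each statement's English description precedes it below -/
import Mathlib

section
/- Let D be a domain in ℝⁿ and T ∈ (0,∞]. Suppose for each t ∈ [0,T) the map a ↦ X(a,t) is a diffeomorphism of D with inverse A(·,t), and suppose sup over (a,t) ∈ D×[0,T) of |det(∇ₐX(a,t))| is finite. Let W : D×[0,T) → ℝⁿ be a vector field transported by X, i.e. W(X(a,t),t) = ∇ₐX(a,t)·W₀(a) for all (a,t), where W₀ = W(·,0) satisfies ‖W₀‖_{L^∞(D)} < ∞. For each (x,t) let λ₁(x,t) ≥ λ₂(x,t) ≥ ⋯ ≥ λₙ(x,t) > 0 be the eigenvalues of the symmetric positive definite matrix M(x,t) = (∇A(x,t))ᵀ ∇A(x,t). If there exists a sequence (x_k,t_k) ∈ D×[0,T) converging to some (x̄,t̄) ∈ closure(D)×[0,T] with |W(x_k,t_k)| → ∞ as k → ∞, then necessarily λ₁(x_k,t_k) → ∞ and λₙ(x_k,t_k) → 0 as k → ∞. -/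
open Filter Topology Set
open scoped ENNReal RealInnerProductSpace

/-! At a point `x` of the blow-up sequence put `a = A(x,t)`, `K = ∇A(x,t)` and `L = ∇ₐX(a,t)`.
The chain rule gives `K ∘ L = id`, so transport yields `K W(x,t) = W₀(a)` and
`det K · det L = 1`. As `M = KᵀK` has the orthonormal eigenbasis `eⱼ`, the first identity gives
`λₙ |W(x,t)|² ≤ |W₀(a)|² ≤ ‖W₀‖²_∞`, which forces `λₙ → 0`; the second gives
`1 ≤ C² det M = C² ∏ λⱼ ≤ C² λ₁ⁿ⁻¹ λₙ` for a bound `C` of `|det L|`, which then forces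
`λ₁ → ∞`. -/

theorem LinearMap.det_eq_prod_of_apply_basis_eq_smul {R M ι : Type*} [CommRing R]
    [AddCommGroup M] [Module R M] [Fintype ι] {f : M →ₗ[R] M} (b : Module.Basis ι R M)
    {c : ι → R} (hf : ∀ j, f (b j) = c j • b j) : LinearMap.det f = ∏ j, c j := by
  classical
  have hdiag : f = Matrix.toLin b b (Matrix.diagonal c) :=
    b.ext fun j => by simp [Matrix.toLin_self, hf j, Matrix.diagonal_apply]
  rw [hdiag, LinearMap.det_toLin, Matrix.det_diagonal]

theorem LinearMap.det_adjoint {𝕜 E : Type*} [RCLike 𝕜] [NormedAddCommGroup E]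
    [InnerProductSpace 𝕜 E] [FiniteDimensional 𝕜 E] (f : E →ₗ[𝕜] E) :
    LinearMap.det (LinearMap.adjoint f) = star (LinearMap.det f) := by
  let b := stdOrthonormalBasis 𝕜 E
  rw [← LinearMap.det_toMatrix b.toBasis, ← LinearMap.det_toMatrix b.toBasis,
    LinearMap.toMatrix_adjoint, Matrix.det_conjTranspose]

theorem Orthonormal.exists_orthonormalBasis_eq {𝕜 E ι : Type*} [RCLike 𝕜] [NormedAddCommGroup E]
    [InnerProductSpace 𝕜 E] [Fintype ι] [Nonempty ι] {v : ι → E} (hv : Orthonormal 𝕜 v)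
    (hcard : Fintype.card ι = Module.finrank 𝕜 E) : ∃ b : OrthonormalBasis ι 𝕜 E, ⇑b = v :=
  ⟨.mk hv (hv.linearIndependent.span_eq_top_of_card_eq_finrank hcard).ge,
    OrthonormalBasis.coe_mk _ _⟩

theorem fderiv_comp_fderiv_eq_id_of_leftInvOn {𝕜 E F : Type*} [NontriviallyNormedField 𝕜]
    [NormedAddCommGroup E] [NormedSpace 𝕜 E] [NormedAddCommGroup F] [NormedSpace 𝕜 F]
    {f : E → F} {g : F → E} {s : Set E} {a : E} {y : F} (hs : s ∈ 𝓝 a) (hgf : LeftInvOn g f s)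
    (hfa : f a = y) (hg : DifferentiableAt 𝕜 g y) (hf : DifferentiableAt 𝕜 f a) :
    fderiv 𝕜 g y ∘L fderiv 𝕜 f a = ContinuousLinearMap.id 𝕜 E := by
  subst hfa
  have hid : g ∘ f =ᶠ[𝓝 a] id := Filter.mem_of_superset hs hgf
  rw [← fderiv_comp a hg hf, hid.fderiv_eq, fderiv_id]

theorem Fin.prod_le_pow_mul_last {R : Type*} [CommSemiring R] [PartialOrder R] [IsOrderedRing R]
    {n : ℕ} {f : Fin (n + 1) → R} (hf : Antitone f) (h0 : ∀ j, 0 ≤ f j) :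
    ∏ j, f j ≤ f 0 ^ n * f (Fin.last n) := by
  rw [Fin.prod_univ_castSucc]
  gcongr
  · exact h0 _
  · calc ∏ i : Fin n, f i.castSucc ≤ ∏ _i : Fin n, f 0 :=
          Finset.prod_le_prod (fun i _ => h0 _) fun i _ => hf (Fin.zero_le _)
      _ = f 0 ^ n := by simp

section GramEigenbasis

variable {E ι : Type*} [NormedAddCommGroup E] [InnerProductSpace ℝ E] [FiniteDimensional ℝ E]
  [Fintype ι] {K : E →L[ℝ] E} {b : OrthonormalBasis ι ℝ E} {lam : ι → ℝ}

open ContinuousLinearMap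

theorem norm_sq_apply_eq_sum_mul_inner_sq (hK : ∀ j, (adjoint K ∘L K) (b j) = lam j • b j)
    (v : E) : ‖K v‖ ^ 2 = ∑ j, lam j * ⟪b j, v⟫ ^ 2 := by
  have hcoef : ∀ j, ⟪b j, adjoint K (K v)⟫ = lam j * ⟪b j, v⟫ := fun j => by
    rw [adjoint_inner_right, ← adjoint_inner_left, ← comp_apply, hK j, real_inner_smul_left]
  rw [← real_inner_self_eq_norm_sq, ← adjoint_inner_right, ← b.sum_inner_mul_inner]
  refine Finset.sum_congr rfl fun j _ => ?_
  rw [hcoef, real_inner_comm]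
  ring

theorem mul_norm_sq_le_norm_sq_apply (hK : ∀ j, (adjoint K ∘L K) (b j) = lam j • b j)
    {μ : ℝ} (hμ : ∀ j, μ ≤ lam j) (v : E) : μ * ‖v‖ ^ 2 ≤ ‖K v‖ ^ 2 := by
  rw [norm_sq_apply_eq_sum_mul_inner_sq hK, ← b.sum_sq_inner_right, Finset.mul_sum]
  gcongr with j
  exact hμ j

theorem det_sq_eq_prod (hK : ∀ j, (adjoint K ∘L K) (b j) = lam j • b j) :
    LinearMap.det (K : E →ₗ[ℝ] E) ^ 2 = ∏ j, lam j := by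
  have hgram : LinearMap.det ((adjoint K ∘L K : E →L[ℝ] E) : E →ₗ[ℝ] E) = ∏ j, lam j :=
    LinearMap.det_eq_prod_of_apply_basis_eq_smul b.toBasis (by simpa using hK)
  rw [← hgram, toLinearMap_comp, LinearMap.det_comp, ← adjoint_toLinearMap,
    LinearMap.det_adjoint, star_trivial, sq]

theorem mul_norm_sq_apply_le_of_comp_eq_id (hK : ∀ j, (adjoint K ∘L K) (b j) = lam j • b j)
    {L : E →L[ℝ] E} (hKL : K ∘L L = ContinuousLinearMap.id ℝ E) {μ : ℝ} (hμ : ∀ j, μ ≤ lam j)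
    (w : E) : μ * ‖L w‖ ^ 2 ≤ ‖w‖ ^ 2 := by
  simpa [← comp_apply, hKL] using mul_norm_sq_le_norm_sq_apply hK hμ (L w)

theorem one_le_sq_mul_prod_of_comp_eq_id (hK : ∀ j, (adjoint K ∘L K) (b j) = lam j • b j)
    {L : E →L[ℝ] E} (hKL : K ∘L L = ContinuousLinearMap.id ℝ E) {C : ℝ}
    (hL : |LinearMap.det (L : E →ₗ[ℝ] E)| ≤ C) : 1 ≤ C ^ 2 * ∏ j, lam j := by
  have hdet : LinearMap.det (K : E →ₗ[ℝ] E) * LinearMap.det (L : E →ₗ[ℝ] E) = 1 := by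
    rw [← LinearMap.det_comp, ← toLinearMap_comp, hKL, coe_id, LinearMap.det_id]
  have hprod : 0 ≤ ∏ j, lam j := det_sq_eq_prod hK ▸ sq_nonneg _
  calc 1 = (∏ j, lam j) * |LinearMap.det (L : E →ₗ[ℝ] E)| ^ 2 := by
        rw [← det_sq_eq_prod hK, sq_abs, ← mul_pow, hdet, one_pow]
    _ ≤ C ^ 2 * ∏ j, lam j := by
        rw [mul_comm]
        gcongr

end GramEigenbasis

section Asymptotics

variable {α : Type*} {l : Filter α} {μ ν w : α → ℝ}

theorem tendsto_nhds_zero_of_mul_sq_le {B : ℝ} (hμ : ∀ᶠ k in l, 0 ≤ μ k)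
    (hB : ∀ᶠ k in l, μ k * w k ^ 2 ≤ B) (hw : Tendsto w l atTop) : Tendsto μ l (𝓝 0) := by
  have hw2 : Tendsto (fun k => w k ^ 2) l atTop := (tendsto_pow_atTop two_ne_zero).comp hw
  refine tendsto_of_tendsto_of_tendsto_of_le_of_le' tendsto_const_nhds
    ((tendsto_const_nhds (x := B)).div_atTop hw2) hμ ?_
  filter_upwards [hB, hw2.eventually_gt_atTop 0] with k hk hpos
  exact (le_div_iff₀ hpos).2 hk

theorem tendsto_atTop_of_tendsto_pow {n : ℕ} (hν : ∀ᶠ k in l, 0 ≤ ν k)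
    (h : Tendsto (fun k => ν k ^ n) l atTop) : Tendsto ν l atTop := by
  refine tendsto_atTop.2 fun c => ?_
  filter_upwards [hν, h.eventually_gt_atTop (max c 0 ^ n)] with k hk hpow
  exact (le_max_left c 0).trans (lt_of_pow_lt_pow_left₀ n hk hpow).le

theorem tendsto_atTop_of_one_le_mul_pow_mul [l.NeBot] {c : ℝ} {n : ℕ} (hμ : ∀ᶠ k in l, 0 < μ k)
    (hν : ∀ᶠ k in l, 0 ≤ ν k) (h : ∀ᶠ k in l, 1 ≤ c * (ν k ^ n * μ k))
    (hμ0 : Tendsto μ l (𝓝 0)) : Tendsto ν l atTop := by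
  obtain ⟨k, hk, hνk, hμk⟩ := (h.and (hν.and hμ)).exists
  have hc : 0 < c := pos_of_mul_pos_left (one_pos.trans_le hk) (by positivity)
  have hinv : Tendsto (fun k => (μ k)⁻¹) l atTop :=
    (tendsto_nhdsWithin_iff.2 ⟨hμ0, hμ⟩).inv_tendsto_nhdsGT_zero
  have hcν : Tendsto (fun k => c * ν k ^ n) l atTop := by
    refine tendsto_atTop_mono' l ?_ hinv
    filter_upwards [h, hμ] with k hk hμk
    rw [inv_le_iff_one_le_mul₀ hμk, mul_assoc]
    exact hk
  exact tendsto_atTop_of_tendsto_pow hν (hcν.atTop_of_const_mul₀ hc)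

end Asymptotics

theorem singularity_forces_eigenvalue_blowup_general
    (n : ℕ)
    (D : Set (EuclideanSpace ℝ (Fin (n + 1)))) (hD : IsOpen D)
    (Tdom : Set ℝ)
    (X A W : EuclideanSpace ℝ (Fin (n + 1)) → ℝ → EuclideanSpace ℝ (Fin (n + 1)))
    -- `X(·,t)` is a diffeomorphism of `D` with inverse `A(·,t)`
    (hAmaps : ∀ t ∈ Tdom, Set.MapsTo (fun x => A x t) D D)
    (hAX : ∀ t ∈ Tdom, ∀ a ∈ D, A (X a t) t = a)
    (hXA : ∀ t ∈ Tdom, ∀ x ∈ D, X (A x t) t = x)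
    (hXdiff : ∀ t ∈ Tdom, ∀ a ∈ D, DifferentiableAt ℝ (fun a => X a t) a)
    (hAdiff : ∀ t ∈ Tdom, ∀ x ∈ D, DifferentiableAt ℝ (fun x => A x t) x)
    -- uniformly bounded Jacobian determinant of `∇ₐX`
    (hdet : ∃ C : ℝ, ∀ t ∈ Tdom, ∀ a ∈ D,
      |LinearMap.det ((fderiv ℝ (fun a => X a t) a : EuclideanSpace ℝ (Fin (n + 1)) →L[ℝ]
        EuclideanSpace ℝ (Fin (n + 1))) : EuclideanSpace ℝ (Fin (n + 1)) →ₗ[ℝ]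
        EuclideanSpace ℝ (Fin (n + 1)))| ≤ C)
    -- `W` is transported by `X`:  `W(X(a,t),t) = ∇ₐX(a,t)·W₀(a)`, `W₀ = W(·,0)`
    (htrans : ∀ t ∈ Tdom, ∀ a ∈ D, W (X a t) t = fderiv ℝ (fun a => X a t) a (W a 0))
    -- `‖W₀‖_{L^∞(D)} < ∞`
    (hW0 : ∃ C : ℝ, ∀ a ∈ D, ‖W a 0‖ ≤ C)
    -- eigenvalues (decreasing) and orthonormal eigenvectors of `M = (∇A)ᵀ∇A`
    (lam : Fin (n + 1) → EuclideanSpace ℝ (Fin (n + 1)) → ℝ → ℝ)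
    (e : Fin (n + 1) → EuclideanSpace ℝ (Fin (n + 1)) → ℝ →
      EuclideanSpace ℝ (Fin (n + 1)))
    (horth : ∀ t ∈ Tdom, ∀ x ∈ D, Orthonormal ℝ (fun j => e j x t))
    (heig : ∀ t ∈ Tdom, ∀ x ∈ D, ∀ j,
      (ContinuousLinearMap.adjoint (fderiv ℝ (fun x => A x t) x) ∘L
        fderiv ℝ (fun x => A x t) x) (e j x t) = lam j x t • e j x t)
    (hord : ∀ t ∈ Tdom, ∀ x ∈ D, ∀ i j : Fin (n + 1), i ≤ j → lam j x t ≤ lam i x t)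
    (hpos : ∀ t ∈ Tdom, ∀ x ∈ D, ∀ j, 0 < lam j x t)
    -- a blow-up sequence `(x_k, t_k) → (x̄, t̄) ∈ closure D × [0,T]`
    (xk : ℕ → EuclideanSpace ℝ (Fin (n + 1))) (tk : ℕ → ℝ)
    (hmem : ∀ k, xk k ∈ D ∧ tk k ∈ Tdom)
    (hblow : Tendsto (fun k => ‖W (xk k) (tk k)‖) atTop atTop) :
    Tendsto (fun k => lam 0 (xk k) (tk k)) atTop atTop ∧
    Tendsto (fun k => lam (Fin.last n) (xk k) (tk k)) atTop (𝓝 0) := by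
  obtain ⟨C, hC⟩ := hdet
  obtain ⟨B, hB⟩ := hW0
  have hbound : ∀ t ∈ Tdom, ∀ x ∈ D, lam (Fin.last n) x t * ‖W x t‖ ^ 2 ≤ B ^ 2 ∧
      1 ≤ C ^ 2 * (lam 0 x t ^ n * lam (Fin.last n) x t) := by
    intro t ht x hx
    set a := A x t
    have ha : a ∈ D := hAmaps t ht hx
    have hXa : X a t = x := hXA t ht x hx
    have hKL := fderiv_comp_fderiv_eq_id_of_leftInvOn (f := fun y => X y t) (g := fun y => A y t)
      (hD.mem_nhds ha) (hAX t ht) hXa (hAdiff t ht x hx) (hXdiff t ht a ha)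
    have hWx : W x t = fderiv ℝ (fun y => X y t) a (W a 0) := hXa ▸ htrans t ht a ha
    obtain ⟨b, hb⟩ := (horth t ht x hx).exists_orthonormalBasis_eq (by simp)
    have hK := fun j => (congrFun hb j).symm ▸ heig t ht x hx j
    constructor
    · calc lam (Fin.last n) x t * ‖W x t‖ ^ 2 ≤ ‖W a 0‖ ^ 2 := by
            rw [hWx]
            exact mul_norm_sq_apply_le_of_comp_eq_id hK hKL
              (fun j => hord t ht x hx _ _ (Fin.le_last j)) _
        _ ≤ B ^ 2 := by gcongr; exact hB a ha
    · calc 1 ≤ C ^ 2 * ∏ j, lam j x t := one_le_sq_mul_prod_of_comp_eq_id hK hKL (hC t ht a ha)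
        _ ≤ C ^ 2 * (lam 0 x t ^ n * lam (Fin.last n) x t) := by
            gcongr
            exact Fin.prod_le_pow_mul_last (hord t ht x hx) fun j => (hpos t ht x hx j).le
  have hlam (j : Fin (n + 1)) (k : ℕ) := hpos _ (hmem k).2 _ (hmem k).1 j
  have hbound_k (k : ℕ) := hbound _ (hmem k).2 _ (hmem k).1
  have hlast := tendsto_nhds_zero_of_mul_sq_le (.of_forall fun k => (hlam _ k).le)
    (.of_forall fun k => (hbound_k k).1) hblow
  exact ⟨tendsto_atTop_of_one_le_mul_pow_mul (.of_forall (hlam _))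
    (.of_forall fun k => (hlam 0 k).le) (.of_forall fun k => (hbound_k k).2) hlast, hlast⟩

/-- Let `D ⊆ ℝⁿ` be a domain, `T ∈ (0,∞]`, and for each `t ∈ [0,T)` let
`X(·,t)` be a diffeomorphism of `D` with inverse `A(·,t)`, with
`sup_{(a,t)} |det ∇ₐX(a,t)| < ∞`.  Let `W` be a vector field transported by `X` with
`‖W₀‖_{L^∞(D)} < ∞`, and let `λ₁ ≥ ⋯ ≥ λₙ > 0` be the eigenvalues of
`M(x,t) = (∇A(x,t))ᵀ∇A(x,t)`.  If `(x_k,t_k) → (x̄,t̄) ∈ closure D × [0,T]` with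
`|W(x_k,t_k)| → ∞`, then `λ₁(x_k,t_k) → ∞` and `λₙ(x_k,t_k) → 0`. -/
theorem singularity_forces_eigenvalue_blowup
    (n : ℕ)
    (D : Set (EuclideanSpace ℝ (Fin (n + 1)))) (hD : IsOpen D)
    (T : ℝ≥0∞) (hT : 0 < T)
    (Tdom : Set ℝ) (hTdom : Tdom = {t : ℝ | 0 ≤ t ∧ ENNReal.ofReal t < T})
    (X A W : EuclideanSpace ℝ (Fin (n + 1)) → ℝ → EuclideanSpace ℝ (Fin (n + 1)))
    -- `X(·,t)` is a diffeomorphism of `D` with inverse `A(·,t)`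
    (hXmaps : ∀ t ∈ Tdom, Set.MapsTo (fun a => X a t) D D)
    (hAmaps : ∀ t ∈ Tdom, Set.MapsTo (fun x => A x t) D D)
    (hAX : ∀ t ∈ Tdom, ∀ a ∈ D, A (X a t) t = a)
    (hXA : ∀ t ∈ Tdom, ∀ x ∈ D, X (A x t) t = x)
    (hXdiff : ∀ t ∈ Tdom, ∀ a ∈ D, DifferentiableAt ℝ (fun a => X a t) a)
    (hAdiff : ∀ t ∈ Tdom, ∀ x ∈ D, DifferentiableAt ℝ (fun x => A x t) x)
    -- uniformly bounded Jacobian determinant of `∇ₐX`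
    (hdet : ∃ C : ℝ, ∀ t ∈ Tdom, ∀ a ∈ D,
      |LinearMap.det ((fderiv ℝ (fun a => X a t) a : EuclideanSpace ℝ (Fin (n + 1)) →L[ℝ]
        EuclideanSpace ℝ (Fin (n + 1))) : EuclideanSpace ℝ (Fin (n + 1)) →ₗ[ℝ]
        EuclideanSpace ℝ (Fin (n + 1)))| ≤ C)
    -- `W` is transported by `X`:  `W(X(a,t),t) = ∇ₐX(a,t)·W₀(a)`, `W₀ = W(·,0)`
    (htrans : ∀ t ∈ Tdom, ∀ a ∈ D, W (X a t) t = fderiv ℝ (fun a => X a t) a (W a 0))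
    -- `‖W₀‖_{L^∞(D)} < ∞`
    (hW0 : ∃ C : ℝ, ∀ a ∈ D, ‖W a 0‖ ≤ C)
    -- eigenvalues (decreasing) and orthonormal eigenvectors of `M = (∇A)ᵀ∇A`
    (lam : Fin (n + 1) → EuclideanSpace ℝ (Fin (n + 1)) → ℝ → ℝ)
    (e : Fin (n + 1) → EuclideanSpace ℝ (Fin (n + 1)) → ℝ →
      EuclideanSpace ℝ (Fin (n + 1)))
    (horth : ∀ t ∈ Tdom, ∀ x ∈ D, Orthonormal ℝ (fun j => e j x t))
    (heig : ∀ t ∈ Tdom, ∀ x ∈ D, ∀ j,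
      (ContinuousLinearMap.adjoint (fderiv ℝ (fun x => A x t) x) ∘L
        fderiv ℝ (fun x => A x t) x) (e j x t) = lam j x t • e j x t)
    (hord : ∀ t ∈ Tdom, ∀ x ∈ D, ∀ i j : Fin (n + 1), i ≤ j → lam j x t ≤ lam i x t)
    (hpos : ∀ t ∈ Tdom, ∀ x ∈ D, ∀ j, 0 < lam j x t)
    -- a blow-up sequence `(x_k, t_k) → (x̄, t̄) ∈ closure D × [0,T]`
    (xk : ℕ → EuclideanSpace ℝ (Fin (n + 1))) (tk : ℕ → ℝ)
    (hmem : ∀ k, xk k ∈ D ∧ tk k ∈ Tdom)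
    (xbar : EuclideanSpace ℝ (Fin (n + 1))) (tbar : ℝ)
    (hxbar : xbar ∈ closure D) (htbar : 0 ≤ tbar ∧ ENNReal.ofReal tbar ≤ T)
    (hconv : Tendsto (fun k => (xk k, tk k)) atTop (𝓝 (xbar, tbar)))
    (hblow : Tendsto (fun k => ‖W (xk k) (tk k)‖) atTop atTop) :
    Tendsto (fun k => lam 0 (xk k) (tk k)) atTop atTop ∧
    Tendsto (fun k => lam (Fin.last n) (xk k) (tk k)) atTop (𝓝 0) :=
  singularity_forces_eigenvalue_blowup_general n D hD Tdom X A W hAmaps hAX hXA hXdiff hAdiff hdet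
    htrans hW0 lam e horth heig hord hpos xk tk hmem hblow
end

section
/- Let v : ℝ³×[0,T) → ℝ³ be a smooth divergence-free velocity field with vorticity ω = curl v satisfying the vorticity transport formula ω(X(a,t),t) = ∇ₐX(a,t)·ω₀(a), where X(·,t) is the particle trajectory map of v (with det ∇ₐX ≡ 1), A(·,t) its inverse, and ‖ω₀‖_{L^∞} < ∞. Let ξ(x,t) = ω(x,t)/|ω(x,t)|, and let λ₁(x,t) ≥ λ₂(x,t) ≥ λ₃(x,t) > 0 and e₁,e₂,e₃ be the eigenvalues and normalized eigenvectors of M(x,t) = (∇A(x,t))ᵀ∇A(x,t). If (x_k,t_k) → (x̄,t̄) with |ω(x_k,t_k)| → ∞, then: (i) λ₁(x_k,t_k) → ∞ and λ₃(x_k,t_k) → 0; (ii) ξ(x_k,t_k)·e₁(x_k,t_k) → 0; and (iii) if additionally liminf_{k→∞} λ₂(x_k,t_k) > 0, then also ξ(x_k,t_k)·e₂(x_k,t_k) → 0. -/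
open Filter Topology Set
open scoped ENNReal RealInnerProductSpace

noncomputable section

local notation "E3" => EuclideanSpace ℝ (Fin 3)

private lemma aux_det_eq_prod (b : OrthonormalBasis (Fin 3) ℝ E3)
    (M : E3 →L[ℝ] E3) (lam : Fin 3 → ℝ)
    (heig : ∀ j, M (b j) = lam j • b j) :
    LinearMap.det (M : E3 →ₗ[ℝ] E3) = ∏ j, lam j := by
  rw [← LinearMap.det_toMatrix b.toBasis, ← Matrix.det_diagonal]
  congr 1
  ext i j
  rw [LinearMap.toMatrix_apply, OrthonormalBasis.coe_toBasis, ContinuousLinearMap.coe_coe,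
    heig j]
  simp [OrthonormalBasis.coe_toBasis_repr_apply, OrthonormalBasis.repr_self,
    EuclideanSpace.single_apply, Matrix.diagonal]
  aesop

private lemma aux_det_adjoint_comp (f : E3 →L[ℝ] E3) :
    LinearMap.det ((ContinuousLinearMap.adjoint f ∘L f) : E3 →ₗ[ℝ] E3) =
      (LinearMap.det (f : E3 →ₗ[ℝ] E3)) ^ 2 := by
  have b : OrthonormalBasis (Fin 3) ℝ E3 := EuclideanSpace.basisFun (Fin 3) ℝ
  have hadj : LinearMap.det ((ContinuousLinearMap.adjoint f : E3 →L[ℝ] E3) : E3 →ₗ[ℝ] E3)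
      = LinearMap.det (f : E3 →ₗ[ℝ] E3) := by
    have h1 : ((ContinuousLinearMap.adjoint f : E3 →L[ℝ] E3) : E3 →ₗ[ℝ] E3)
        = LinearMap.adjoint (f : E3 →ₗ[ℝ] E3) := rfl
    rw [h1, ← LinearMap.det_toMatrix b.toBasis, LinearMap.toMatrix_adjoint b b,
      Matrix.det_conjTranspose, LinearMap.det_toMatrix]
    simp
  rw [ContinuousLinearMap.toLinearMap_comp, LinearMap.det_comp, hadj, sq]

private lemma aux_sum_eig (b : OrthonormalBasis (Fin 3) ℝ E3)
    (M : E3 →L[ℝ] E3) (lam : Fin 3 → ℝ)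
    (heig : ∀ j, M (b j) = lam j • b j) (u : E3) :
    ∑ j, lam j * ⟪b j, u⟫ ^ 2 = ⟪M u, u⟫ := by
  have hu : ∑ i, ⟪b i, u⟫ • b i = u := b.sum_repr' u
  conv_rhs => rw [← hu]
  rw [map_sum, sum_inner]
  refine Finset.sum_congr rfl fun j _ => ?_
  rw [map_smul, heig j, smul_smul, real_inner_smul_left, hu]
  ring

private lemma aux_parseval (b : OrthonormalBasis (Fin 3) ℝ E3) (u : E3) :
    ∑ j, ⟪b j, u⟫ ^ 2 = ‖u‖ ^ 2 := by
  have := b.sum_inner_mul_inner u u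
  rw [← real_inner_self_eq_norm_sq, ← this]
  refine Finset.sum_congr rfl fun j _ => ?_
  rw [real_inner_comm u (b j), sq]


/-- For the 3D incompressible Euler equations: let `v` be a smooth
divergence-free velocity field with vorticity `ω = curl v` satisfying the vorticity
transport formula `ω(X(a,t),t) = ∇ₐX(a,t)·ω₀(a)`, where `X` is the particle trajectory
map (`det ∇ₐX ≡ 1`), `A` its inverse, and `‖ω₀‖_{L^∞} < ∞`.  Let `ξ = ω/|ω|` and
`λ₁ ≥ λ₂ ≥ λ₃ > 0`, `e₁,e₂,e₃` the eigenvalues and normalized eigenvectors of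
`M = (∇A)ᵀ∇A`.  If `(x_k,t_k) → (x̄,t̄)` with `|ω(x_k,t_k)| → ∞`, then (i) `λ₁ → ∞` and
`λ₃ → 0`; (ii) `ξ·e₁ → 0`; (iii) if moreover `liminf λ₂(x_k,t_k) > 0` then `ξ·e₂ → 0`. -/
theorem euler_vorticity_direction_at_singularity
    (T : ℝ≥0∞) (hT : 0 < T)
    (Tdom : Set ℝ) (hTdom : Tdom = {t : ℝ | 0 ≤ t ∧ ENNReal.ofReal t < T})
    (v ω X A : EuclideanSpace ℝ (Fin 3) → ℝ → EuclideanSpace ℝ (Fin 3))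
    -- `v` is smooth and divergence free
    (hvsmooth : ∀ t ∈ Tdom, ContDiff ℝ (⊤ : ℕ∞) (fun x => v x t))
    (hdiv : ∀ x, ∀ t ∈ Tdom,
      (∑ i, fderiv ℝ (fun y => v y t) x (EuclideanSpace.single i (1 : ℝ)) i) = 0)
    -- `ω = curl v`
    (hω : ∀ x, ∀ t ∈ Tdom, ω x t = (EuclideanSpace.equiv (Fin 3) ℝ).symm
      ![fderiv ℝ (fun y => v y t) x (EuclideanSpace.single 1 (1 : ℝ)) 2 -
          fderiv ℝ (fun y => v y t) x (EuclideanSpace.single 2 (1 : ℝ)) 1,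
        fderiv ℝ (fun y => v y t) x (EuclideanSpace.single 2 (1 : ℝ)) 0 -
          fderiv ℝ (fun y => v y t) x (EuclideanSpace.single 0 (1 : ℝ)) 2,
        fderiv ℝ (fun y => v y t) x (EuclideanSpace.single 0 (1 : ℝ)) 1 -
          fderiv ℝ (fun y => v y t) x (EuclideanSpace.single 1 (1 : ℝ)) 0])
    -- `X` is the particle trajectory map of `v`, `A` the back-to-label map
    (hX0 : ∀ a, X a 0 = a)
    (hXode : ∀ a, ∀ t ∈ Tdom, HasDerivAt (fun τ => X a τ) (v (X a t) t) t)
    (hAX : ∀ t ∈ Tdom, ∀ a, A (X a t) t = a)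
    (hXA : ∀ t ∈ Tdom, ∀ x, X (A x t) t = x)
    (hXdiff : ∀ t ∈ Tdom, ∀ a, DifferentiableAt ℝ (fun a => X a t) a)
    (hAdiff : ∀ t ∈ Tdom, ∀ x, DifferentiableAt ℝ (fun x => A x t) x)
    -- volume preservation and the vorticity transport formula
    (hdet1 : ∀ t ∈ Tdom, ∀ a,
      LinearMap.det ((fderiv ℝ (fun a => X a t) a : EuclideanSpace ℝ (Fin 3) →L[ℝ]
        EuclideanSpace ℝ (Fin 3)) : EuclideanSpace ℝ (Fin 3) →ₗ[ℝ]
        EuclideanSpace ℝ (Fin 3)) = 1)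
    (htransport : ∀ t ∈ Tdom, ∀ a, ω (X a t) t = fderiv ℝ (fun a => X a t) a (ω a 0))
    -- `‖ω₀‖_{L^∞} < ∞`
    (hω0 : ∃ C : ℝ, ∀ a, ‖ω a 0‖ ≤ C)
    -- eigenvalues `λ₁ ≥ λ₂ ≥ λ₃ > 0` and normalized eigenvectors of `M = (∇A)ᵀ∇A`
    (lam : Fin 3 → EuclideanSpace ℝ (Fin 3) → ℝ → ℝ)
    (e : Fin 3 → EuclideanSpace ℝ (Fin 3) → ℝ → EuclideanSpace ℝ (Fin 3))
    (horth : ∀ x, ∀ t ∈ Tdom, Orthonormal ℝ (fun j => e j x t))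
    (heig : ∀ x, ∀ t ∈ Tdom, ∀ j,
      (ContinuousLinearMap.adjoint (fderiv ℝ (fun x => A x t) x) ∘L
        fderiv ℝ (fun x => A x t) x) (e j x t) = lam j x t • e j x t)
    (hord : ∀ x, ∀ t ∈ Tdom, ∀ i j : Fin 3, i ≤ j → lam j x t ≤ lam i x t)
    (hpos : ∀ x, ∀ t ∈ Tdom, ∀ j, 0 < lam j x t)
    -- blow-up sequence
    (xk : ℕ → EuclideanSpace ℝ (Fin 3)) (tk : ℕ → ℝ) (htk : ∀ k, tk k ∈ Tdom)
    (xbar : EuclideanSpace ℝ (Fin 3)) (tbar : ℝ)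
    (hconv : Tendsto (fun k => (xk k, tk k)) atTop (𝓝 (xbar, tbar)))
    (hblow : Tendsto (fun k => ‖ω (xk k) (tk k)‖) atTop atTop) :
    -- (i)
    (Tendsto (fun k => lam 0 (xk k) (tk k)) atTop atTop ∧
      Tendsto (fun k => lam 2 (xk k) (tk k)) atTop (𝓝 0)) ∧
    -- (ii)
    Tendsto (fun k =>
      ⟪‖ω (xk k) (tk k)‖⁻¹ • ω (xk k) (tk k), e 0 (xk k) (tk k)⟫) atTop (𝓝 0) ∧
    -- (iii)
    (0 < Filter.liminf (fun k => lam 1 (xk k) (tk k)) atTop →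
      Tendsto (fun k =>
        ⟪‖ω (xk k) (tk k)‖⁻¹ • ω (xk k) (tk k), e 1 (xk k) (tk k)⟫) atTop (𝓝 0)) := by
  classical
  obtain ⟨C₀, hC₀⟩ := hω0
  set C : ℝ := max C₀ 0 with hCdef
  have hCnn : 0 ≤ C := le_max_right _ _
  have hC : ∀ a, ‖ω a 0‖ ≤ C := fun a => (hC₀ a).trans (le_max_left _ _)
  -- master pointwise facts
  have master : ∀ k,
      lam 0 (xk k) (tk k) * lam 1 (xk k) (tk k) * lam 2 (xk k) (tk k) = 1 ∧
      (∑ j, lam j (xk k) (tk k) * ⟪e j (xk k) (tk k), ω (xk k) (tk k)⟫ ^ 2) ≤ C ^ 2 ∧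
      (∑ j, ⟪e j (xk k) (tk k), ω (xk k) (tk k)⟫ ^ 2) = ‖ω (xk k) (tk k)‖ ^ 2 := by
    intro k
    have ht := htk k
    set x := xk k with hxdef
    set t := tk k with htdef
    have hon := horth x t ht
    have hcard : Fintype.card (Fin 3) = Module.finrank ℝ (EuclideanSpace ℝ (Fin 3)) := by
      simp [finrank_euclideanSpace]
    have hsp : ⊤ ≤ Submodule.span ℝ (Set.range fun j => e j x t) :=
      (hon.linearIndependent.span_eq_top_of_card_eq_finrank hcard).ge
    let b : OrthonormalBasis (Fin 3) ℝ (EuclideanSpace ℝ (Fin 3)) :=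
      OrthonormalBasis.mk hon hsp
    have hb : ∀ j, b j = e j x t := fun j => by
      simp [b, OrthonormalBasis.coe_mk]
    set f : EuclideanSpace ℝ (Fin 3) →L[ℝ] EuclideanSpace ℝ (Fin 3) :=
      fderiv ℝ (fun y => A y t) x with hfdef
    set M : EuclideanSpace ℝ (Fin 3) →L[ℝ] EuclideanSpace ℝ (Fin 3) :=
      ContinuousLinearMap.adjoint f ∘L f with hMdef
    have heig' : ∀ j, M (b j) = lam j x t • b j := fun j => by
      rw [hb j]; exact heig x t ht j
    -- chain rule
    have hxX : X (A x t) t = x := hXA t ht x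
    have hcomp : f.comp (fderiv ℝ (fun a => X a t) (A x t)) =
        ContinuousLinearMap.id ℝ (EuclideanSpace ℝ (Fin 3)) := by
      have h2 := fderiv_comp (𝕜 := ℝ) (A x t) (hAdiff t ht _) (hXdiff t ht _)
      have h3 : ((fun y => A y t) ∘ fun a => X a t) = id := by
        funext b'; simp [Function.comp, hAX t ht]
      rw [h3, fderiv_id] at h2
      beta_reduce at h2
      rw [hxX] at h2
      exact h2.symm
    -- determinant of f is 1
    have hdetf : LinearMap.det (f : EuclideanSpace ℝ (Fin 3) →ₗ[ℝ]
        EuclideanSpace ℝ (Fin 3)) = 1 := by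
      have := congrArg (fun g : EuclideanSpace ℝ (Fin 3) →L[ℝ] EuclideanSpace ℝ (Fin 3) =>
        LinearMap.det (g : EuclideanSpace ℝ (Fin 3) →ₗ[ℝ] EuclideanSpace ℝ (Fin 3))) hcomp
      simpa [ContinuousLinearMap.coe_comp, LinearMap.det_comp,
        hdet1 t ht (A x t)] using this
    -- product of eigenvalues is 1
    have hprod : lam 0 x t * lam 1 x t * lam 2 x t = 1 := by
      have h4 := aux_det_eq_prod b M (fun j => lam j x t) heig'
      rw [aux_det_adjoint_comp f, hdetf] at h4
      simpa [Fin.prod_univ_three, mul_assoc] using h4.symm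
    -- transport : f (ω x t) = ω (A x t) 0
    have hAω : f (ω x t) = ω (A x t) 0 := by
      have h5 := htransport t ht (A x t)
      rw [hxX] at h5
      rw [h5]
      have h6 := congrArg (fun g : EuclideanSpace ℝ (Fin 3) →L[ℝ] EuclideanSpace ℝ (Fin 3) =>
        g (ω (A x t) 0)) hcomp
      simpa using h6
    -- sum bound
    have hsum : (∑ j, lam j x t * ⟪e j x t, ω x t⟫ ^ 2) ≤ C ^ 2 := by
      have h7 : (∑ j, lam j x t * ⟪e j x t, ω x t⟫ ^ 2) = ‖f (ω x t)‖ ^ 2 := by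
        have := aux_sum_eig b M (fun j => lam j x t) heig' (ω x t)
        simp only [hb] at this
        rw [this, hMdef, ContinuousLinearMap.comp_apply,
          ContinuousLinearMap.adjoint_inner_left, real_inner_self_eq_norm_sq]
      rw [h7, hAω]
      exact pow_le_pow_left₀ (norm_nonneg _) (hC _) 2
    have hpar : (∑ j, ⟪e j x t, ω x t⟫ ^ 2) = ‖ω x t‖ ^ 2 := by
      have := aux_parseval b (ω x t)
      simpa only [hb] using this
    exact ⟨hprod, hsum, hpar⟩
  -- shorthand
  have hL2pos : ∀ k, 0 < lam 2 (xk k) (tk k) := fun k => hpos _ _ (htk k) 2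
  have hL1pos : ∀ k, 0 < lam 1 (xk k) (tk k) := fun k => hpos _ _ (htk k) 1
  have hL0pos : ∀ k, 0 < lam 0 (xk k) (tk k) := fun k => hpos _ _ (htk k) 0
  have hord21 : ∀ k, lam 2 (xk k) (tk k) ≤ lam 1 (xk k) (tk k) := fun k =>
    hord _ _ (htk k) 1 2 (by decide)
  have hord10 : ∀ k, lam 1 (xk k) (tk k) ≤ lam 0 (xk k) (tk k) := fun k =>
    hord _ _ (htk k) 0 1 (by decide)
  have hW1 : ∀ᶠ k in atTop, (1 : ℝ) ≤ ‖ω (xk k) (tk k)‖ := hblow.eventually_ge_atTop 1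
  have hWsq : Tendsto (fun k => ‖ω (xk k) (tk k)‖ ^ 2) atTop atTop := by
    simpa [sq] using hblow.atTop_mul_atTop₀ hblow
  -- individual bounds : lam j * c j ^2 ≤ C ^2
  have hind : ∀ k, ∀ j, lam j (xk k) (tk k) * ⟪e j (xk k) (tk k), ω (xk k) (tk k)⟫ ^ 2
      ≤ C ^ 2 := by
    intro k j
    refine le_trans ?_ (master k).2.1
    exact Finset.single_le_sum (f := fun j => lam j (xk k) (tk k) *
      ⟪e j (xk k) (tk k), ω (xk k) (tk k)⟫ ^ 2)
      (fun i _ => mul_nonneg (hpos _ _ (htk k) i).le (sq_nonneg _)) (Finset.mem_univ j)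
  -- lam 2 → 0
  have hL2bound : ∀ k, lam 2 (xk k) (tk k) * ‖ω (xk k) (tk k)‖ ^ 2 ≤ C ^ 2 := by
    intro k
    obtain ⟨hprod, hsum, hpar⟩ := master k
    calc lam 2 (xk k) (tk k) * ‖ω (xk k) (tk k)‖ ^ 2
        = ∑ j, lam 2 (xk k) (tk k) * ⟪e j (xk k) (tk k), ω (xk k) (tk k)⟫ ^ 2 := by
          rw [← Finset.mul_sum, hpar]
      _ ≤ ∑ j, lam j (xk k) (tk k) * ⟪e j (xk k) (tk k), ω (xk k) (tk k)⟫ ^ 2 := by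
          refine Finset.sum_le_sum fun j _ => ?_
          refine mul_le_mul_of_nonneg_right ?_ (sq_nonneg _)
          exact hord _ _ (htk k) j 2 (by fin_cases j <;> decide)
      _ ≤ C ^ 2 := hsum
  have hL2tend : Tendsto (fun k => lam 2 (xk k) (tk k)) atTop (𝓝 0) := by
    have hub : ∀ᶠ k in atTop, lam 2 (xk k) (tk k) ≤ C ^ 2 / ‖ω (xk k) (tk k)‖ ^ 2 := by
      filter_upwards [hW1] with k hk
      rw [le_div_iff₀ (by positivity)]
      exact hL2bound k
    have htend : Tendsto (fun k => C ^ 2 / ‖ω (xk k) (tk k)‖ ^ 2) atTop (𝓝 0) :=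
      tendsto_const_nhds.div_atTop hWsq
    exact squeeze_zero' (Eventually.of_forall fun k => (hL2pos k).le) hub htend
  -- lam 0 → atTop
  have hL0tend : Tendsto (fun k => lam 0 (xk k) (tk k)) atTop atTop := by
    rw [tendsto_atTop]
    intro b
    have hb' : (0:ℝ) < 1 / (max b 1) ^ 2 := by positivity
    have hev : ∀ᶠ k in atTop, lam 2 (xk k) (tk k) < 1 / (max b 1) ^ 2 :=
      hL2tend.eventually_lt_const hb'
    filter_upwards [hev] with k hk
    obtain ⟨hprod, -, -⟩ := master k
    have h1 := hL0pos k; have h2 := hL1pos k; have h3 := hL2pos k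
    have h4 := hord10 k
    have hb1 : (0:ℝ) < max b 1 := lt_of_lt_of_le one_pos (le_max_right _ _)
    by_contra hcon
    push_neg at hcon
    have hb2 : lam 0 (xk k) (tk k) < max b 1 := lt_of_lt_of_le hcon (le_max_left _ _)
    have hb3 : lam 1 (xk k) (tk k) < max b 1 := lt_of_le_of_lt h4 hb2
    have s1 : lam 0 (xk k) (tk k) * lam 1 (xk k) (tk k) < (max b 1) ^ 2 := by nlinarith
    have s2 : lam 0 (xk k) (tk k) * lam 1 (xk k) (tk k) * lam 2 (xk k) (tk k)
        < (max b 1) ^ 2 * lam 2 (xk k) (tk k) := by nlinarith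
    have hk' : lam 2 (xk k) (tk k) * (max b 1) ^ 2 < 1 :=
      (lt_div_iff₀ (by positivity)).mp hk
    nlinarith
  -- lam 0 ≥ 1
  have hL0ge1 : ∀ k, (1:ℝ) ≤ lam 0 (xk k) (tk k) := by
    intro k
    obtain ⟨hprod, -, -⟩ := master k
    have h1 := hL0pos k; have h2 := hL1pos k; have h3 := hL2pos k
    have h4 := hord10 k; have h5 := hord21 k
    by_contra hcon
    push_neg at hcon
    have hL1lt : lam 1 (xk k) (tk k) < 1 := lt_of_le_of_lt h4 hcon
    have hL2lt : lam 2 (xk k) (tk k) < 1 := lt_of_le_of_lt h5 hL1lt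
    nlinarith [mul_pos h1 h2]
  -- (ii)
  have part2 : Tendsto (fun k =>
      ⟪‖ω (xk k) (tk k)‖⁻¹ • ω (xk k) (tk k), e 0 (xk k) (tk k)⟫) atTop (𝓝 0) := by
    have htend : Tendsto (fun k => C / ‖ω (xk k) (tk k)‖) atTop (𝓝 0) :=
      tendsto_const_nhds.div_atTop hblow
    refine squeeze_zero_norm' ?_ htend
    filter_upwards [hW1] with k hk
    have hWpos : (0:ℝ) < ‖ω (xk k) (tk k)‖ := lt_of_lt_of_le one_pos hk
    have hc : |⟪e 0 (xk k) (tk k), ω (xk k) (tk k)⟫| ≤ C := by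
      have h6 := hind k 0
      have h7 := hL0ge1 k
      nlinarith [sq_abs ⟪e 0 (xk k) (tk k), ω (xk k) (tk k)⟫,
        abs_nonneg ⟪e 0 (xk k) (tk k), ω (xk k) (tk k)⟫]
    rw [real_inner_smul_left, real_inner_comm]
    rw [Real.norm_eq_abs, abs_mul, abs_inv, abs_norm, div_eq_inv_mul]
    exact mul_le_mul_of_nonneg_left hc (by positivity)
  refine ⟨⟨hL0tend, hL2tend⟩, part2, ?_⟩
  -- (iii)
  intro hlim
  set L := Filter.liminf (fun k => lam 1 (xk k) (tk k)) atTop with hLdef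
  have hLhalf : ∀ᶠ k in atTop, L / 2 < lam 1 (xk k) (tk k) := by
    refine eventually_lt_of_lt_liminf (by linarith) ?_
    exact isBoundedUnder_of ⟨0, fun k => (hL1pos k).le⟩
  set D : ℝ := Real.sqrt (C ^ 2 / (L / 2)) with hDdef
  have htend : Tendsto (fun k => D / ‖ω (xk k) (tk k)‖) atTop (𝓝 0) :=
    tendsto_const_nhds.div_atTop hblow
  refine squeeze_zero_norm' ?_ htend
  filter_upwards [hW1, hLhalf] with k hk hLk
  have hWpos : (0:ℝ) < ‖ω (xk k) (tk k)‖ := lt_of_lt_of_le one_pos hk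
  have hLpos : (0:ℝ) < L / 2 := by linarith
  have hc2 : ⟪e 1 (xk k) (tk k), ω (xk k) (tk k)⟫ ^ 2 ≤ C ^ 2 / (L / 2) := by
    rw [le_div_iff₀ hLpos]
    have h6 := hind k 1
    nlinarith [sq_nonneg ⟪e 1 (xk k) (tk k), ω (xk k) (tk k)⟫]
  have hc : |⟪e 1 (xk k) (tk k), ω (xk k) (tk k)⟫| ≤ D := by
    rw [← Real.sqrt_sq_eq_abs, hDdef]
    exact Real.sqrt_le_sqrt hc2
  rw [real_inner_smul_left, real_inner_comm]
  rw [Real.norm_eq_abs, abs_mul, abs_inv, abs_norm, div_eq_inv_mul]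
  exact mul_le_mul_of_nonneg_left hc (by positivity)
end
end

section
/- Let (v,ρ) be a smooth solution of the isentropic Euler equations with ρ > 0, ω = curl v, ‖ω₀/ρ₀‖_{L^∞} < ∞, X(·,t) the particle trajectory map of v, and suppose ω(X(a,t),t)/ρ(X(a,t),t) = ∇ₐX(a,t)·(ω₀(a)/ρ₀(a)). Let γ₀ be a vortex line of ω₀ and γ(s,t) = X(γ₀(s),t). If there exist a sequence (s_k,t_k) → (s̄,t̄) with |ω(γ(s_k,t_k),t_k)| / |ρ(γ(s_k,t_k),t_k)| → ∞, then necessarily |∂γ/∂s(s_k,t_k)| → ∞. (A singularity of |ω|/|ρ| at a point is accompanied by infinite stretching of the vortex line at the same point.) -/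
open Filter Topology Set
open scoped ENNReal

noncomputable section

/-- Let `(v,ρ)` be a smooth solution of the isentropic compressible
Euler equations with `ρ > 0`, `ω = curl v`, `‖ω₀/ρ₀‖_{L^∞} < ∞`, `X(·,t)` the particle
trajectory map of `v`, with the transport formula
`ω(X(a,t),t)/ρ(X(a,t),t) = ∇ₐX(a,t)·(ω₀(a)/ρ₀(a))`.  Let `γ₀` be a vortex line of `ω₀`
and `γ(s,t) = X(γ₀(s),t)`.  If `(s_k,t_k) → (s̄,t̄)` with
`|ω(γ(s_k,t_k),t_k)|/|ρ(γ(s_k,t_k),t_k)| → ∞`, then `|∂γ/∂s(s_k,t_k)| → ∞`: a singularity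
of `|ω|/|ρ|` at a point is accompanied by infinite stretching of the vortex line there. -/
theorem isentropic_euler_blowup_forces_vortex_line_stretching
    (T : ℝ≥0∞) (hT : 0 < T)
    (Tdom : Set ℝ) (hTdom : Tdom = {t : ℝ | 0 ≤ t ∧ ENNReal.ofReal t < T})
    (v ω X : EuclideanSpace ℝ (Fin 3) → ℝ → EuclideanSpace ℝ (Fin 3))
    (ρ p : EuclideanSpace ℝ (Fin 3) → ℝ → ℝ)
    -- smoothness and positivity of the density
    (hvsmooth : ∀ t ∈ Tdom, ContDiff ℝ (⊤ : ℕ∞) (fun x => v x t))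
    (hρsmooth : ∀ t ∈ Tdom, ContDiff ℝ (⊤ : ℕ∞) (fun x => ρ x t))
    (hpsmooth : ∀ t ∈ Tdom, ContDiff ℝ (⊤ : ℕ∞) (fun x => p x t))
    (hρpos : ∀ x, ∀ t ∈ Tdom, 0 < ρ x t)
    -- the isentropic Euler equations:  `ρ(∂v/∂t + (v·∇)v) = −∇p`
    (hmom : ∀ x, ∀ t ∈ Tdom,
      ρ x t • (deriv (fun τ => v x τ) t + fderiv ℝ (fun y => v y t) x (v x t)) =
        -(EuclideanSpace.equiv (Fin 3) ℝ).symm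
          (fun i => fderiv ℝ (fun y => p y t) x (EuclideanSpace.single i (1 : ℝ))))
    -- and `∂ρ/∂t + div(ρ v) = 0`
    (hcont : ∀ x, ∀ t ∈ Tdom,
      deriv (fun τ => ρ x τ) t +
        (∑ i, fderiv ℝ (fun y => ρ y t * v y t i) x (EuclideanSpace.single i (1 : ℝ)))
        = 0)
    -- `ω = curl v`
    (hω : ∀ x, ∀ t ∈ Tdom, ω x t = (EuclideanSpace.equiv (Fin 3) ℝ).symm
      ![fderiv ℝ (fun y => v y t) x (EuclideanSpace.single 1 (1 : ℝ)) 2 -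
          fderiv ℝ (fun y => v y t) x (EuclideanSpace.single 2 (1 : ℝ)) 1,
        fderiv ℝ (fun y => v y t) x (EuclideanSpace.single 2 (1 : ℝ)) 0 -
          fderiv ℝ (fun y => v y t) x (EuclideanSpace.single 0 (1 : ℝ)) 2,
        fderiv ℝ (fun y => v y t) x (EuclideanSpace.single 0 (1 : ℝ)) 1 -
          fderiv ℝ (fun y => v y t) x (EuclideanSpace.single 1 (1 : ℝ)) 0])
    -- `X` is the particle trajectory map of `v`
    (hX0 : ∀ a, X a 0 = a)
    (hXode : ∀ a, ∀ t ∈ Tdom, HasDerivAt (fun τ => X a τ) (v (X a t) t) t)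
    (hXdiff : ∀ t ∈ Tdom, ∀ a, DifferentiableAt ℝ (fun a => X a t) a)
    -- the transport formula  `ω(X(a,t),t)/ρ(X(a,t),t) = ∇ₐX(a,t)·(ω₀(a)/ρ₀(a))`
    (htransport : ∀ t ∈ Tdom, ∀ a,
      (ρ (X a t) t)⁻¹ • ω (X a t) t =
        fderiv ℝ (fun a => X a t) a ((ρ a 0)⁻¹ • ω a 0))
    -- `γ₀ : I → ℝ³` is a vortex line of `ω₀`
    (I : Set ℝ) (γ₀ : ℝ → EuclideanSpace ℝ (Fin 3)) (f : ℝ → ℝ)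
    (hf : ∀ s ∈ I, f s ≠ 0)
    (hγ₀ : ∀ s ∈ I, HasDerivAt γ₀ (f s • ω (γ₀ s) 0) s)
    -- `‖ω₀/ρ₀‖_{L^∞} < ∞`
    (hω0ρ0 : ∃ C : ℝ, ∀ a, ‖(ρ a 0)⁻¹ • ω a 0‖ ≤ C)
    -- a blow-up sequence `(s_k,t_k) → (s̄,t̄)` along the transported vortex line
    (sk : ℕ → ℝ) (tk : ℕ → ℝ) (hsk : ∀ k, sk k ∈ I) (htk : ∀ k, tk k ∈ Tdom)
    (sbar tbar : ℝ) (hsbar : sbar ∈ I) (hfc : ContinuousAt f sbar)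
    (hconv : Tendsto (fun k => (sk k, tk k)) atTop (𝓝 (sbar, tbar)))
    (hblow : Tendsto (fun k =>
      ‖ω (X (γ₀ (sk k)) (tk k)) (tk k)‖ / |ρ (X (γ₀ (sk k)) (tk k)) (tk k)|)
      atTop atTop) :
    -- then the vortex line is infinitely stretched:  `|∂γ/∂s(s_k,t_k)| → ∞`
    Tendsto (fun k => ‖deriv (fun s => X (γ₀ s) (tk k)) (sk k)‖) atTop atTop := by

  have h0dom : (0:ℝ) ∈ Tdom := by
    rw [hTdom]; exact ⟨le_refl 0, by simpa using hT⟩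
  -- key formula for the derivative along the transported vortex line
  have key : ∀ k, ‖deriv (fun s => X (γ₀ s) (tk k)) (sk k)‖ =
      (|f (sk k)| * |ρ (γ₀ (sk k)) 0|) *
      (‖ω (X (γ₀ (sk k)) (tk k)) (tk k)‖ / |ρ (X (γ₀ (sk k)) (tk k)) (tk k)|) := by
    intro k
    set a := γ₀ (sk k)
    set t := tk k
    have hd : HasDerivAt (fun s => X (γ₀ s) t)
        (fderiv ℝ (fun a => X a t) a (f (sk k) • ω a 0)) (sk k) :=
      (hXdiff t (htk k) a).hasFDerivAt.comp_hasDerivAt _ (hγ₀ (sk k) (hsk k))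
    rw [hd.deriv]
    have hρ0 : ρ a 0 ≠ 0 := (hρpos a 0 h0dom).ne'
    have hrw : f (sk k) • ω a 0 = (f (sk k) * ρ a 0) • ((ρ a 0)⁻¹ • ω a 0) := by
      rw [mul_smul, smul_inv_smul₀ hρ0]
    rw [hrw, (fderiv ℝ (fun a => X a t) a).map_smul,
      ← htransport t (htk k) a]
    rw [norm_smul, norm_smul, norm_inv]
    simp only [Real.norm_eq_abs, abs_mul, div_eq_mul_inv]
    ring
  have hskconv : Tendsto sk atTop (𝓝 sbar) := (continuous_fst.tendsto _).comp hconv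
  have hγc : ContinuousAt γ₀ sbar := (hγ₀ sbar hsbar).differentiableAt.continuousAt
  have hρc : ContinuousAt (fun x => ρ x 0) (γ₀ sbar) :=
    (hρsmooth 0 h0dom).continuous.continuousAt
  have hcoef : Tendsto (fun k => |f (sk k)| * |ρ (γ₀ (sk k)) 0|) atTop
      (𝓝 (|f sbar| * |ρ (γ₀ sbar) 0|)) := by
    apply Tendsto.mul
    · exact ((continuous_abs.continuousAt.comp hfc).tendsto.comp hskconv)
    · exact ((continuous_abs.continuousAt.comp (hρc.comp hγc)).tendsto.comp hskconv)
  have hpos : 0 < |f sbar| * |ρ (γ₀ sbar) 0| := by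
    apply mul_pos
    · exact abs_pos.mpr (hf sbar hsbar)
    · exact abs_pos.mpr (hρpos (γ₀ sbar) 0 h0dom).ne'
  have := Tendsto.pos_mul_atTop hpos hcoef hblow
  simpa only [key] using this
end
end

section
/- Let (v,b) be a smooth solution of the ideal MHD equations in ℝ³ with ‖b₀‖_{L^∞} < ∞, let X(·,t) be the particle trajectory map generated by v (with det ∇ₐX ≡ 1 from div v = 0), A(·,t) its inverse, and suppose b satisfies the transport formula b(X(a,t),t) = ∇ₐX(a,t)·b₀(a). Let ξ(x,t) = b(x,t)/|b(x,t)|, and let λ₁(x,t) ≥ λ₂(x,t) ≥ λ₃(x,t) > 0 and e₁,e₂,e₃ be the eigenvalues and normalized eigenvectors of M(x,t) = (∇A(x,t))ᵀ∇A(x,t). If (x_k,t_k) → (x̄,t̄) with |b(x_k,t_k)| → ∞, then: (i) λ₁(x_k,t_k) → ∞ and λ₃(x_k,t_k) → 0; (ii) ξ(x_k,t_k)·e₁(x_k,t_k) → 0; and (iii) if additionally liminf_{k→∞} λ₂(x_k,t_k) > 0, then also ξ(x_k,t_k)·e₂(x_k,t_k) → 0. -/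
open Filter Topology Set
open scoped ENNReal RealInnerProductSpace

noncomputable section

section Aux
open Matrix

local notation "E3" => EuclideanSpace ℝ (Fin 3)

lemma aux_det_adjoint_clm (T : E3 →L[ℝ] E3) :
    LinearMap.det ((ContinuousLinearMap.adjoint T : E3 →L[ℝ] E3) : E3 →ₗ[ℝ] E3)
      = LinearMap.det (T : E3 →ₗ[ℝ] E3) := by
  have hco : ((ContinuousLinearMap.adjoint T : E3 →L[ℝ] E3) : E3 →ₗ[ℝ] E3)
      = LinearMap.adjoint (T : E3 →ₗ[ℝ] E3) := by
    rw [LinearMap.adjoint_eq_toCLM_adjoint]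
    congr 1
  rw [hco]
  set onb := EuclideanSpace.basisFun (Fin 3) ℝ
  rw [← LinearMap.det_toMatrix onb.toBasis, ← LinearMap.det_toMatrix onb.toBasis,
    LinearMap.toMatrix_adjoint]
  rw [show ((LinearMap.toMatrix onb.toBasis onb.toBasis) (T : E3 →ₗ[ℝ] E3))ᴴ =
    ((LinearMap.toMatrix onb.toBasis onb.toBasis) (T : E3 →ₗ[ℝ] E3))ᵀ from by
      ext i j; simp [Matrix.conjTranspose]]
  exact Matrix.det_transpose _

lemma aux_det_eq_prod_eig (f : E3 →ₗ[ℝ] E3) (lam : Fin 3 → ℝ)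
    (onb : OrthonormalBasis (Fin 3) ℝ E3)
    (heig : ∀ j, f (onb j) = lam j • onb j) :
    LinearMap.det f = ∏ j, lam j := by
  rw [← LinearMap.det_toMatrix onb.toBasis]
  have hM : LinearMap.toMatrix onb.toBasis onb.toBasis f = Matrix.diagonal lam := by
    ext i j
    rw [LinearMap.toMatrix_apply, OrthonormalBasis.coe_toBasis, heig, _root_.map_smul]
    rcases eq_or_ne i j with h | h
    · subst h
      simp [OrthonormalBasis.coe_toBasis_repr_apply, OrthonormalBasis.repr_self]
    · simp [Matrix.diagonal_apply_ne _ h, OrthonormalBasis.coe_toBasis_repr_apply,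
        OrthonormalBasis.repr_self, EuclideanSpace.single_apply, Ne.symm h]
  rw [hM, Matrix.det_diagonal]

lemma aux_onb_of_orth {e : Fin 3 → E3} (h : Orthonormal ℝ e) :
    ∃ onb : OrthonormalBasis (Fin 3) ℝ E3, ∀ j, onb j = e j := by
  have hcard : Fintype.card (Fin 3) = Module.finrank ℝ E3 := by simp
  let bas := basisOfOrthonormalOfCardEqFinrank h hcard
  have hb : ⇑bas = e := coe_basisOfOrthonormalOfCardEqFinrank h hcard
  refine ⟨bas.toOrthonormalBasis (by rwa [hb]), fun j => ?_⟩
  rw [Module.Basis.coe_toOrthonormalBasis, hb]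

end Aux

/-- Let `(v,b)` be a smooth solution of the ideal MHD equations in
`ℝ³` with `‖b₀‖_{L^∞} < ∞`, `X(·,t)` the particle trajectory map of `v` (with
`det ∇ₐX ≡ 1`), `A(·,t)` its inverse, and `b(X(a,t),t) = ∇ₐX(a,t)·b₀(a)`.  Let
`ξ = b/|b|` and `λ₁ ≥ λ₂ ≥ λ₃ > 0`, `e₁,e₂,e₃` the eigenvalues and normalized
eigenvectors of `M = (∇A)ᵀ∇A`.  If `(x_k,t_k) → (x̄,t̄)` with `|b(x_k,t_k)| → ∞`, then
(i) `λ₁ → ∞` and `λ₃ → 0`; (ii) `ξ·e₁ → 0`; (iii) if moreover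
`liminf λ₂(x_k,t_k) > 0` then `ξ·e₂ → 0`. -/
theorem mhd_magnetic_direction_at_singularity
    (T : ℝ≥0∞) (hT : 0 < T)
    (Tdom : Set ℝ) (hTdom : Tdom = {t : ℝ | 0 ≤ t ∧ ENNReal.ofReal t < T})
    (v b X curlb : EuclideanSpace ℝ (Fin 3) → ℝ → EuclideanSpace ℝ (Fin 3))
    (p : EuclideanSpace ℝ (Fin 3) → ℝ → ℝ)
    -- smoothness
    (hvsmooth : ∀ t ∈ Tdom, ContDiff ℝ (⊤ : ℕ∞) (fun x => v x t))
    (hbsmooth : ∀ t ∈ Tdom, ContDiff ℝ (⊤ : ℕ∞) (fun x => b x t))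
    (hpsmooth : ∀ t ∈ Tdom, ContDiff ℝ (⊤ : ℕ∞) (fun x => p x t))
    -- `curl b`
    (hcurlb : ∀ x, ∀ t ∈ Tdom, curlb x t = (EuclideanSpace.equiv (Fin 3) ℝ).symm
      ![fderiv ℝ (fun y => b y t) x (EuclideanSpace.single 1 (1 : ℝ)) 2 -
          fderiv ℝ (fun y => b y t) x (EuclideanSpace.single 2 (1 : ℝ)) 1,
        fderiv ℝ (fun y => b y t) x (EuclideanSpace.single 2 (1 : ℝ)) 0 -
          fderiv ℝ (fun y => b y t) x (EuclideanSpace.single 0 (1 : ℝ)) 2,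
        fderiv ℝ (fun y => b y t) x (EuclideanSpace.single 0 (1 : ℝ)) 1 -
          fderiv ℝ (fun y => b y t) x (EuclideanSpace.single 1 (1 : ℝ)) 0])
    -- the ideal MHD equations:  `∂v/∂t + (v·∇)v = −∇p − b × curl b`
    (hmomentum : ∀ x, ∀ t ∈ Tdom,
      deriv (fun τ => v x τ) t + fderiv ℝ (fun y => v y t) x (v x t) =
        -(EuclideanSpace.equiv (Fin 3) ℝ).symm
            (fun i => fderiv ℝ (fun y => p y t) x (EuclideanSpace.single i (1 : ℝ)))
          - (EuclideanSpace.equiv (Fin 3) ℝ).symm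
              (crossProduct (fun i => b x t i) (fun i => curlb x t i)))
    -- `∂b/∂t + (v·∇)b = (b·∇)v`
    (hinduction : ∀ x, ∀ t ∈ Tdom,
      deriv (fun τ => b x τ) t + fderiv ℝ (fun y => b y t) x (v x t) =
        fderiv ℝ (fun y => v y t) x (b x t))
    -- `div v = div b = 0`
    (hdivv : ∀ x, ∀ t ∈ Tdom,
      (∑ i, fderiv ℝ (fun y => v y t) x (EuclideanSpace.single i (1 : ℝ)) i) = 0)
    (hdivb : ∀ x, ∀ t ∈ Tdom,
      (∑ i, fderiv ℝ (fun y => b y t) x (EuclideanSpace.single i (1 : ℝ)) i) = 0)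
    -- `X` is the particle trajectory map of `v`
    (hX0 : ∀ a, X a 0 = a)
    (hXode : ∀ a, ∀ t ∈ Tdom, HasDerivAt (fun τ => X a τ) (v (X a t) t) t)
    (hXdiff : ∀ t ∈ Tdom, ∀ a, DifferentiableAt ℝ (fun a => X a t) a)
    -- the transport formula for the magnetic field
    (htransport : ∀ t ∈ Tdom, ∀ a, b (X a t) t = fderiv ℝ (fun a => X a t) a (b a 0))
    -- `A` is the back-to-label map
    (A : EuclideanSpace ℝ (Fin 3) → ℝ → EuclideanSpace ℝ (Fin 3))
    (hAX : ∀ t ∈ Tdom, ∀ a, A (X a t) t = a)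
    (hXA : ∀ t ∈ Tdom, ∀ x, X (A x t) t = x)
    (hAdiff : ∀ t ∈ Tdom, ∀ x, DifferentiableAt ℝ (fun x => A x t) x)
    -- volume preservation
    (hdet1 : ∀ t ∈ Tdom, ∀ a,
      LinearMap.det ((fderiv ℝ (fun a => X a t) a : EuclideanSpace ℝ (Fin 3) →L[ℝ]
        EuclideanSpace ℝ (Fin 3)) : EuclideanSpace ℝ (Fin 3) →ₗ[ℝ]
        EuclideanSpace ℝ (Fin 3)) = 1)
    -- `‖b₀‖_{L^∞} < ∞`
    (hb0 : ∃ C : ℝ, ∀ a, ‖b a 0‖ ≤ C)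
    -- eigenvalues `λ₁ ≥ λ₂ ≥ λ₃ > 0` and normalized eigenvectors of `M = (∇A)ᵀ∇A`
    (lam : Fin 3 → EuclideanSpace ℝ (Fin 3) → ℝ → ℝ)
    (e : Fin 3 → EuclideanSpace ℝ (Fin 3) → ℝ → EuclideanSpace ℝ (Fin 3))
    (horth : ∀ x, ∀ t ∈ Tdom, Orthonormal ℝ (fun j => e j x t))
    (heig : ∀ x, ∀ t ∈ Tdom, ∀ j,
      (ContinuousLinearMap.adjoint (fderiv ℝ (fun x => A x t) x) ∘L
        fderiv ℝ (fun x => A x t) x) (e j x t) = lam j x t • e j x t)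
    (hord : ∀ x, ∀ t ∈ Tdom, ∀ i j : Fin 3, i ≤ j → lam j x t ≤ lam i x t)
    (hpos : ∀ x, ∀ t ∈ Tdom, ∀ j, 0 < lam j x t)
    -- blow-up sequence
    (xk : ℕ → EuclideanSpace ℝ (Fin 3)) (tk : ℕ → ℝ) (htk : ∀ k, tk k ∈ Tdom)
    (xbar : EuclideanSpace ℝ (Fin 3)) (tbar : ℝ)
    (hconv : Tendsto (fun k => (xk k, tk k)) atTop (𝓝 (xbar, tbar)))
    (hblow : Tendsto (fun k => ‖b (xk k) (tk k)‖) atTop atTop) :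
    -- (i)
    (Tendsto (fun k => lam 0 (xk k) (tk k)) atTop atTop ∧
      Tendsto (fun k => lam 2 (xk k) (tk k)) atTop (𝓝 0)) ∧
    -- (ii)
    Tendsto (fun k =>
      ⟪‖b (xk k) (tk k)‖⁻¹ • b (xk k) (tk k), e 0 (xk k) (tk k)⟫) atTop (𝓝 0) ∧
    -- (iii)
    (0 < Filter.liminf (fun k => lam 1 (xk k) (tk k)) atTop →
      Tendsto (fun k =>
        ⟪‖b (xk k) (tk k)‖⁻¹ • b (xk k) (tk k), e 1 (xk k) (tk k)⟫) atTop (𝓝 0)) := by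
  classical
  obtain ⟨C, hC⟩ := hb0
  have hC0 : 0 ≤ C := le_trans (norm_nonneg _) (hC 0)
  -- chain rule : DA(X a t) ∘ DX(a) = id
  have hDADX : ∀ t ∈ Tdom, ∀ a : EuclideanSpace ℝ (Fin 3),
      (fderiv ℝ (fun x => A x t) (X a t)).comp (fderiv ℝ (fun a => X a t) a)
        = ContinuousLinearMap.id ℝ (EuclideanSpace ℝ (Fin 3)) := by
    intro t ht a
    have hfun : (fun y => A y t) ∘ (fun a => X a t) = id := funext fun a => hAX t ht a
    have h := fderiv_comp (𝕜 := ℝ) a (hAdiff t ht (X a t)) (hXdiff t ht a)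
    rw [hfun, fderiv_id] at h
    exact h.symm
  -- `∇A x t (b x t) = b (A x t) 0`
  have hDAb : ∀ t ∈ Tdom, ∀ x,
      fderiv ℝ (fun x => A x t) x (b x t) = b (A x t) 0 := by
    intro t ht x
    have hx : X (A x t) t = x := hXA t ht x
    have htr := htransport t ht (A x t)
    rw [hx] at htr
    have hcomp := hDADX t ht (A x t)
    rw [hx] at hcomp
    calc fderiv ℝ (fun x => A x t) x (b x t)
        = fderiv ℝ (fun x => A x t) x (fderiv ℝ (fun a => X a t) (A x t) (b (A x t) 0)) := by
          rw [← htr]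
      _ = ((fderiv ℝ (fun x => A x t) x).comp (fderiv ℝ (fun a => X a t) (A x t)))
            (b (A x t) 0) := rfl
      _ = b (A x t) 0 := by rw [hcomp]; rfl
  -- `det ∇A = 1`
  have hdetDA : ∀ t ∈ Tdom, ∀ x, LinearMap.det
      ((fderiv ℝ (fun x => A x t) x : EuclideanSpace ℝ (Fin 3) →L[ℝ]
        EuclideanSpace ℝ (Fin 3)) : EuclideanSpace ℝ (Fin 3) →ₗ[ℝ]
        EuclideanSpace ℝ (Fin 3)) = 1 := by
    intro t ht x
    have hcomp := hDADX t ht (A x t)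
    rw [hXA t ht x] at hcomp
    have hdet := congrArg (fun f : EuclideanSpace ℝ (Fin 3) →L[ℝ] EuclideanSpace ℝ (Fin 3) =>
      LinearMap.det (f : EuclideanSpace ℝ (Fin 3) →ₗ[ℝ] EuclideanSpace ℝ (Fin 3))) hcomp
    simp only [ContinuousLinearMap.toLinearMap_comp, LinearMap.det_comp,
      ContinuousLinearMap.coe_id, LinearMap.det_id] at hdet
    rw [hdet1 t ht (A x t), mul_one] at hdet
    exact hdet
  -- product of eigenvalues is 1
  have hprodlam : ∀ x, ∀ t ∈ Tdom, lam 0 x t * lam 1 x t * lam 2 x t = 1 := by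
    intro x t ht
    obtain ⟨onb, honb⟩ := aux_onb_of_orth (horth x t ht)
    have hdet := aux_det_eq_prod_eig
      (((ContinuousLinearMap.adjoint (fderiv ℝ (fun x => A x t) x) ∘L
        fderiv ℝ (fun x => A x t) x) : EuclideanSpace ℝ (Fin 3) →L[ℝ]
        EuclideanSpace ℝ (Fin 3)) : EuclideanSpace ℝ (Fin 3) →ₗ[ℝ] EuclideanSpace ℝ (Fin 3))
      (fun j => lam j x t) onb (fun j => by rw [honb]; exact heig x t ht j)
    rw [ContinuousLinearMap.toLinearMap_comp, LinearMap.det_comp, aux_det_adjoint_clm,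
      hdetDA t ht x, mul_one, Fin.prod_univ_three] at hdet
    exact hdet.symm
  -- the key quadratic estimate
  have hquad : ∀ x, ∀ t ∈ Tdom,
      ∑ j, lam j x t * ⟪e j x t, b x t⟫ ^ 2 ≤ C ^ 2 := by
    intro x t ht
    obtain ⟨onb, honb⟩ := aux_onb_of_orth (horth x t ht)
    set w := b x t with hw
    have hMw : ⟪(ContinuousLinearMap.adjoint (fderiv ℝ (fun x => A x t) x) ∘L
        fderiv ℝ (fun x => A x t) x) w, w⟫
        = ‖fderiv ℝ (fun x => A x t) x w‖ ^ 2 := by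
      rw [ContinuousLinearMap.comp_apply, ContinuousLinearMap.adjoint_inner_left]
      exact real_inner_self_eq_norm_sq _
    have hexp : w = ∑ j, ⟪e j x t, w⟫ • e j x t := by
      conv_lhs => rw [← onb.sum_repr' w]
      exact Finset.sum_congr rfl fun j _ => by rw [honb]
    have hMvec : (ContinuousLinearMap.adjoint (fderiv ℝ (fun x => A x t) x) ∘L
        fderiv ℝ (fun x => A x t) x) w
        = ∑ j, (lam j x t * ⟪e j x t, w⟫) • e j x t := by
      conv_lhs => rw [hexp]
      rw [_root_.map_sum]
      refine Finset.sum_congr rfl fun j _ => ?_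
      rw [_root_.map_smul, heig x t ht j, smul_smul, mul_comm]
    have hMw2 : ⟪(ContinuousLinearMap.adjoint (fderiv ℝ (fun x => A x t) x) ∘L
        fderiv ℝ (fun x => A x t) x) w, w⟫ = ∑ j, lam j x t * ⟪e j x t, w⟫ ^ 2 := by
      rw [hMvec, sum_inner]
      refine Finset.sum_congr rfl fun j _ => ?_
      rw [real_inner_smul_left]; ring
    rw [← hMw2, hMw, hw, hDAb t ht x]
    have := hC (A x t)
    nlinarith [norm_nonneg (b (A x t) 0)]
  -- Parseval
  have hpar : ∀ x, ∀ t ∈ Tdom, ∑ j, ⟪e j x t, b x t⟫ ^ 2 = ‖b x t‖ ^ 2 := by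
    intro x t ht
    obtain ⟨onb, honb⟩ := aux_onb_of_orth (horth x t ht)
    calc ∑ j, ⟪e j x t, b x t⟫ ^ 2
        = ∑ j, ⟪b x t, onb j⟫ * ⟪onb j, b x t⟫ := by
          refine Finset.sum_congr rfl fun j _ => ?_
          rw [honb, real_inner_comm (b x t)]; ring
      _ = ⟪b x t, b x t⟫ := onb.sum_inner_mul_inner _ _
      _ = ‖b x t‖ ^ 2 := real_inner_self_eq_norm_sq _
  -- per-term bound
  have hterm : ∀ x, ∀ t ∈ Tdom, ∀ j, lam j x t * ⟪e j x t, b x t⟫ ^ 2 ≤ C ^ 2 := by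
    intro x t ht j
    refine le_trans ?_ (hquad x t ht)
    exact Finset.single_le_sum (f := fun j => lam j x t * ⟪e j x t, b x t⟫ ^ 2)
      (fun i _ => mul_nonneg (hpos x t ht i).le (sq_nonneg _)) (Finset.mem_univ j)
  -- `‖b‖² → ∞` and `C²/‖b‖² → 0`
  have hB2 : Tendsto (fun k => ‖b (xk k) (tk k)‖ ^ 2) atTop atTop := by
    have := hblow.atTop_mul_atTop₀ hblow
    simpa [pow_two] using this
  have hDiv : ∀ K : ℝ, Tendsto (fun k => K / ‖b (xk k) (tk k)‖ ^ 2) atTop (𝓝 0) :=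
    fun K => tendsto_const_nhds.div_atTop hB2
  have hBpos : ∀ᶠ k in atTop, 1 ≤ ‖b (xk k) (tk k)‖ := hblow.eventually_ge_atTop 1
  -- λ₃ → 0
  have hlam3 : Tendsto (fun k => lam 2 (xk k) (tk k)) atTop (𝓝 0) := by
    refine squeeze_zero' (Eventually.of_forall fun k => (hpos (xk k) (tk k) (htk k) 2).le)
      ?_ (hDiv (C ^ 2))
    filter_upwards [hBpos] with k hk
    have hkk := htk k
    have hsum : lam 2 (xk k) (tk k) * ‖b (xk k) (tk k)‖ ^ 2 ≤ C ^ 2 := by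
      rw [← hpar (xk k) (tk k) hkk, Finset.mul_sum]
      refine le_trans (Finset.sum_le_sum fun j _ => ?_) (hquad (xk k) (tk k) hkk)
      exact mul_le_mul_of_nonneg_right (hord (xk k) (tk k) hkk j 2 (Fin.le_last j)) (sq_nonneg _)
    rw [le_div_iff₀ (by positivity)]
    exact hsum
  -- λ₁ → ∞
  have hlam1 : Tendsto (fun k => lam 0 (xk k) (tk k)) atTop atTop := by
    rw [tendsto_atTop]
    intro M
    set M' := max M 1 with hM'
    have hM'pos : (0:ℝ) < M' := lt_of_lt_of_le one_pos (le_max_right _ _)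
    have hev : ∀ᶠ k in atTop, lam 2 (xk k) (tk k) < (M' ^ 2)⁻¹ :=
      hlam3.eventually_lt_const (by positivity)
    filter_upwards [hev] with k hk
    have hkk := htk k
    have h01 : lam 1 (xk k) (tk k) ≤ lam 0 (xk k) (tk k) :=
      hord (xk k) (tk k) hkk 0 1 (by norm_num [Fin.le_def])
    have hp0 := hpos (xk k) (tk k) hkk 0
    have hp1 := hpos (xk k) (tk k) hkk 1
    have hp2 := hpos (xk k) (tk k) hkk 2
    have hprodk := hprodlam (xk k) (tk k) hkk
    have hinv : M' ^ 2 * (M' ^ 2)⁻¹ = 1 := mul_inv_cancel₀ (by positivity)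
    have hM'le : M' ≤ lam 0 (xk k) (tk k) := by
      by_contra hcon
      push_neg at hcon
      have h1 : lam 0 (xk k) (tk k) * lam 1 (xk k) (tk k) * lam 2 (xk k) (tk k) <
          M' * M' * (M' ^ 2)⁻¹ := by
        have hb1 : lam 0 (xk k) (tk k) * lam 1 (xk k) (tk k) ≤
            lam 0 (xk k) (tk k) * lam 0 (xk k) (tk k) := by nlinarith
        have hb2 : lam 0 (xk k) (tk k) * lam 0 (xk k) (tk k) < M' * M' := by nlinarith
        nlinarith
      rw [hprodk] at h1
      have : M' * M' * (M' ^ 2)⁻¹ = 1 := by rw [← hinv]; ring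
      rw [this] at h1
      exact lt_irrefl _ h1
    exact le_trans (le_max_left _ _) hM'le
  -- main convergence engine for (ii) and (iii)
  have hmain : ∀ (j : Fin 3) (δ : ℝ), 0 < δ →
      (∀ᶠ k in atTop, δ ≤ lam j (xk k) (tk k)) →
      Tendsto (fun k =>
        ⟪‖b (xk k) (tk k)‖⁻¹ • b (xk k) (tk k), e j (xk k) (tk k)⟫) atTop (𝓝 0) := by
    intro j δ hδ hev
    rw [tendsto_zero_iff_abs_tendsto_zero]
    refine squeeze_zero' (g := fun k => Real.sqrt (C ^ 2 / δ / ‖b (xk k) (tk k)‖ ^ 2))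
      (Eventually.of_forall fun k => abs_nonneg _) ?_ ?_
    · filter_upwards [hev, hBpos] with k hk hBk
      have hkk := htk k
      have hBk0 : (0:ℝ) < ‖b (xk k) (tk k)‖ := lt_of_lt_of_le one_pos hBk
      have hi : ⟪‖b (xk k) (tk k)‖⁻¹ • b (xk k) (tk k), e j (xk k) (tk k)⟫
          = ‖b (xk k) (tk k)‖⁻¹ * ⟪e j (xk k) (tk k), b (xk k) (tk k)⟫ := by
        rw [real_inner_smul_left, real_inner_comm]
      have hsq : (⟪‖b (xk k) (tk k)‖⁻¹ • b (xk k) (tk k), e j (xk k) (tk k)⟫) ^ 2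
          ≤ C ^ 2 / δ / ‖b (xk k) (tk k)‖ ^ 2 := by
        rw [hi, mul_pow]
        have h1 : ⟪e j (xk k) (tk k), b (xk k) (tk k)⟫ ^ 2 ≤ C ^ 2 / δ := by
          rw [le_div_iff₀ hδ]
          calc ⟪e j (xk k) (tk k), b (xk k) (tk k)⟫ ^ 2 * δ
              ≤ ⟪e j (xk k) (tk k), b (xk k) (tk k)⟫ ^ 2 * lam j (xk k) (tk k) := by
                exact mul_le_mul_of_nonneg_left hk (sq_nonneg _)
            _ = lam j (xk k) (tk k) * ⟪e j (xk k) (tk k), b (xk k) (tk k)⟫ ^ 2 := by ring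
            _ ≤ C ^ 2 := hterm (xk k) (tk k) hkk j
        calc (‖b (xk k) (tk k)‖⁻¹) ^ 2 * ⟪e j (xk k) (tk k), b (xk k) (tk k)⟫ ^ 2
            ≤ (‖b (xk k) (tk k)‖⁻¹) ^ 2 * (C ^ 2 / δ) :=
              mul_le_mul_of_nonneg_left h1 (by positivity)
          _ = C ^ 2 / δ / ‖b (xk k) (tk k)‖ ^ 2 := by
              rw [inv_pow, inv_mul_eq_div]
      calc |⟪‖b (xk k) (tk k)‖⁻¹ • b (xk k) (tk k), e j (xk k) (tk k)⟫|
          = Real.sqrt ((⟪‖b (xk k) (tk k)‖⁻¹ • b (xk k) (tk k), e j (xk k) (tk k)⟫) ^ 2) := by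
            rw [Real.sqrt_sq_eq_abs]
        _ ≤ Real.sqrt (C ^ 2 / δ / ‖b (xk k) (tk k)‖ ^ 2) := Real.sqrt_le_sqrt hsq
    · have h0 : Tendsto (fun k => C ^ 2 / δ / ‖b (xk k) (tk k)‖ ^ 2) atTop (𝓝 0) :=
        hDiv (C ^ 2 / δ)
      have := (Real.continuous_sqrt.tendsto' 0 0 (by simp)).comp h0
      exact this
  refine ⟨⟨hlam1, hlam3⟩, ?_, ?_⟩
  · exact hmain 0 1 one_pos (hlam1.eventually_ge_atTop 1)
  · intro hliminf
    -- extract a positive eventual lower bound from the liminf hypothesis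
    set S := {a : ℝ | ∀ᶠ k in atTop, a ≤ lam 1 (xk k) (tk k)} with hS
    have hliminf' : 0 < sSup S := by rwa [Filter.liminf_eq] at hliminf
    have hne : S.Nonempty := ⟨0, Eventually.of_forall fun k => (hpos (xk k) (tk k) (htk k) 1).le⟩
    obtain ⟨δ, hδS, hδpos⟩ := exists_lt_of_lt_csSup hne hliminf'
    exact hmain 1 δ hδpos hδS
end
end
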